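/- arXiv:2410.20284 — 2 statements merged into one kernel-verified Lean document; each statement's English description precedes it below -/
import Mathlib

section
/- Let w > 0, z ∈ (0,1), μ ∈ ℝ, and define f(α, β) = -log(1 - σ(w · t(z, α, β))) + μ·w² where t(z,α,β) = (tanh(α(z-β))+1)/2 and σ(x) = 1/(1+exp(-x)). Then f is not a convex function of (α, β) on ℝ². -/
noncomputable def t (v a b : ℝ) : ℝ := (Real.tanh (a * (v - b)) + 1) / 2

noncomputable def sigma (x : ℝ) : ℝ := 1 / (1 + Real.exp (-x))

lemma neg_log_one_sub_sigma (x : ℝ) :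
    -Real.log (1 - sigma x) = Real.log (Real.exp x + 1) := by
  have hx : Real.exp x ≠ 0 := (Real.exp_pos x).ne'
  have h2 : 1 - sigma x = 1 / (Real.exp x + 1) := by
    unfold sigma
    rw [Real.exp_neg]
    have h3 : (0:ℝ) < 1 + (Real.exp x)⁻¹ := by positivity
    field_simp
    ring
  rw [h2, one_div, Real.log_inv, neg_neg]

lemma tanh_lt_one' (x : ℝ) : Real.tanh x < 1 := by
  rw [Real.tanh_eq_sinh_div_cosh, div_lt_one (Real.cosh_pos x)]
  rw [Real.sinh_eq, Real.cosh_eq]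
  have := Real.exp_pos (-x)
  linarith

lemma tanh_pos' {x : ℝ} (hx : 0 < x) : 0 < Real.tanh x := by
  rw [Real.tanh_eq_sinh_div_cosh]
  exact div_pos (Real.sinh_pos_iff.2 hx) (Real.cosh_pos x)

theorem stmt_12 (w z μ : ℝ) (hw : 0 < w) (hz0 : 0 < z) (hz1 : z < 1) :
    ¬ ConvexOn ℝ (Set.univ : Set (ℝ × ℝ))
      (fun θ : ℝ × ℝ => -Real.log (1 - sigma (w * t z θ.1 θ.2)) + μ * w ^ 2) := by
  intro hconv
  set f : ℝ × ℝ → ℝ :=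
    fun θ : ℝ × ℝ => -Real.log (1 - sigma (w * t z θ.1 θ.2)) + μ * w ^ 2 with hf
  have hfval : ∀ a : ℝ, f (a, 0) =
      Real.log (Real.exp (w * ((Real.tanh (a * z) + 1) / 2)) + 1) + μ * w ^ 2 := by
    intro a
    simp only [hf, t, neg_log_one_sub_sigma, sub_zero]
  -- values
  set g : ℝ → ℝ := fun a => f (a, 0) with hg
  set M : ℝ := Real.log (Real.exp w + 1) + μ * w ^ 2 with hM
  -- upper bound
  have hub : ∀ a : ℝ, g a ≤ M := by
    intro a
    show f (a, 0) ≤ M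
    rw [hfval, hM]
    have h1 : Real.tanh (a * z) < 1 := tanh_lt_one' _
    have h2 : w * ((Real.tanh (a * z) + 1) / 2) ≤ w := by nlinarith
    have h3 : Real.exp (w * ((Real.tanh (a * z) + 1) / 2)) + 1 ≤ Real.exp w + 1 := by
      have := Real.exp_le_exp.2 h2; linarith
    have h4 : (0:ℝ) < Real.exp (w * ((Real.tanh (a * z) + 1) / 2)) + 1 := by positivity
    have := Real.log_le_log h4 h3
    linarith
  -- strict increase from 0 to 1
  have hδ : g 0 < g 1 := by
    show f ((0:ℝ), 0) < f ((1:ℝ), 0)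
    rw [hfval, hfval]
    have h1 : 0 < Real.tanh (1 * z) := by
      rw [one_mul]; exact tanh_pos' hz0
    have h2 : w * ((Real.tanh (0 * z) + 1) / 2) < w * ((Real.tanh (1 * z) + 1) / 2) := by
      rw [zero_mul, Real.tanh_zero]
      nlinarith
    have h3 := Real.exp_lt_exp.2 h2
    have h4 : (0:ℝ) < Real.exp (w * ((Real.tanh (0 * z) + 1) / 2)) + 1 := by positivity
    have h5 : Real.exp (w * ((Real.tanh (0 * z) + 1) / 2)) + 1
        < Real.exp (w * ((Real.tanh (1 * z) + 1) / 2)) + 1 := by linarith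
    have := Real.log_lt_log h4 h5
    linarith
  set δ : ℝ := g 1 - g 0 with hδdef
  have hδpos : 0 < δ := by simp [hδdef]; linarith
  set N : ℝ := max 1 ((M - g 0 + 1) / δ) with hN
  have hN1 : (1:ℝ) ≤ N := le_max_left _ _
  have hNpos : 0 < N := lt_of_lt_of_le one_pos hN1
  have hNδ : M - g 0 + 1 ≤ N * δ := by
    have : (M - g 0 + 1) / δ ≤ N := le_max_right _ _
    calc M - g 0 + 1 = ((M - g 0 + 1) / δ) * δ := by field_simp
    _ ≤ N * δ := by nlinarith
  -- convexity inequality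
  have ha : (0:ℝ) ≤ 1 - 1/N := by
    have : 1/N ≤ 1 := by rw [div_le_one hNpos]; exact hN1
    linarith
  have hb : (0:ℝ) ≤ 1/N := by positivity
  have hab : (1 - 1/N) + 1/N = 1 := by ring
  have key := hconv.2 (Set.mem_univ ((0:ℝ), (0:ℝ))) (Set.mem_univ ((N:ℝ), (0:ℝ))) ha hb hab
  have hNne : N ≠ 0 := hNpos.ne'
  have hpt : (1 - 1/N) • ((0:ℝ), (0:ℝ)) + (1/N) • ((N:ℝ), (0:ℝ)) = ((1:ℝ), (0:ℝ)) := by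
    simp [Prod.ext_iff, smul_eq_mul, one_div, inv_mul_cancel₀ hNne]
  rw [hpt] at key
  -- key : f (1,0) ≤ (1-1/N) * f (0,0) + (1/N) * f (N,0)
  have hgN : g N ≤ M := hub N
  have key' : g 1 ≤ (1 - 1/N) * g 0 + (1/N) * g N := key
  have h6 : N * g 1 ≤ (N - 1) * g 0 + g N := by
    have h7 := mul_le_mul_of_nonneg_left key' hNpos.le
    have e1 : N * ((1 - 1/N) * g 0 + (1/N) * g N) = (N - 1) * g 0 + g N := by
      field_simp
    linarith [e1 ▸ h7]
  have hNδ' : M - g 0 + 1 ≤ N * (g 1 - g 0) := by rw [hδdef] at hNδ; exact hNδ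
  have hgNM : g N ≤ M := hgN
  nlinarith [h6, hNδ', hgNM]
end

section
/- Let w > 0, z ∈ (0,1), and ξ ∈ (0,1) with ξ ≠ 1/2. Let α, β be real with α(z - β) < 0, and set θ = (α, β), θ' = (-α, 2z - β). Then with t(z,a,b) = (tanh(a(z-b))+1)/2, we have t evaluated at the convex combination ξθ + (1-ξ)θ' satisfies t(z, ξα + (1-ξ)(-α), ξβ + (1-ξ)(2z-β)) > t(z, α, β). -/
lemma tanh_eq_aux (u : ℝ) : Real.tanh u = 1 - 2 / (Real.exp (2*u) + 1) := by
  rw [Real.tanh_eq_sinh_div_cosh, Real.sinh_eq, Real.cosh_eq]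
  have h1 : Real.exp u + Real.exp (-u) > 0 := by positivity
  have h2 : Real.exp (2*u) + 1 > 0 := by positivity
  have h3 : Real.exp (2*u) = Real.exp u * Real.exp u := by
    rw [two_mul, Real.exp_add]
  have h4 : Real.exp (-u) * Real.exp u = 1 := by
    rw [← Real.exp_add]; simp
  field_simp
  rw [mul_comm u 2, h3]
  linear_combination (-2 * Real.exp u) * h4

lemma tanh_lt_tanh_aux {x y : ℝ} (h : x < y) : Real.tanh x < Real.tanh y := by
  rw [tanh_eq_aux, tanh_eq_aux]
  have hx : (0:ℝ) < Real.exp (2*x) + 1 := by positivity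
  have := Real.exp_lt_exp.mpr (by linarith : 2*x < 2*y)
  have : 2 / (Real.exp (2*y) + 1) < 2 / (Real.exp (2*x) + 1) := by
    apply div_lt_div_of_pos_left <;> linarith
  linarith

theorem stmt_13 (w z ξ α β : ℝ) (hw : 0 < w) (hz0 : 0 < z) (hz1 : z < 1)
    (hξ0 : 0 < ξ) (hξ1 : ξ < 1) (hξne : ξ ≠ 1 / 2) (h : α * (z - β) < 0) :
    t z (ξ * α + (1 - ξ) * (-α)) (ξ * β + (1 - ξ) * (2 * z - β)) > t z α β := by
  unfold t
  have harg : (ξ * α + (1 - ξ) * (-α)) * (z - (ξ * β + (1 - ξ) * (2 * z - β)))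
      = (2*ξ - 1)^2 * (α * (z - β)) := by ring
  have hsq : (2*ξ - 1)^2 < 1 := by nlinarith
  have hsq0 : 0 < (2*ξ - 1)^2 := by
    have : 2*ξ - 1 ≠ 0 := fun hc => hξne (by linarith)
    positivity
  have : α * (z - β) < (2*ξ - 1)^2 * (α * (z - β)) := by nlinarith
  have := tanh_lt_tanh_aux (harg ▸ this)
  linarith
end
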